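/- arXiv:1506.06538 — 3 statements merged into one kernel-verified Lean document; each statement's English description precedes it below -/
import Mathlib

section
/- Bettina's Theorem: Let F denote the Fibonacci numbers with f_1 = 1, f_2 = 1, f_{k+2} = f_{k+1} + f_k, and let n ≥ 1 have Zeckendorf representation n = f_{i_1} + f_{i_2} + ... + f_{i_r} (with i_1 > i_2 > ... > i_r ≥ 2 and no two indices consecutive). Then the sequence a defined by a_0 = 0, a_1 = 1, a_n = min{k < n : k + a_k ≥ n} satisfies a_n = f_{i_1 - 1} + f_{i_2 - 1} + ... + f_{i_r - 1}. -/
/-!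
Write `φ n` (`Nat.zeckendorfShift n`) for the shift `f_{i_1 - 1} + ⋯ + f_{i_r - 1}` of the
Zeckendorf representation of `n`.
We show `a n = φ n` by strong induction, using that `a` is monotone, so that `a n` is the unique
`k < n` with `(k - 1) + a (k - 1) < n ≤ k + a k`.

If the smallest index `i_r` is at least `3`, lowering every index by one is again a Zeckendorf
representation, that of `φ n`, hence `φ n + φ (φ n) = n` because `f_i = f_{i-1} + f_{i-2}`.
If `i_r = 2`, then `n = m + 1` with `m` in the first case and `φ n = φ m + 1`. In both cases
`k = φ n` satisfies the two inequalities; the missing comparisons come from monotonicity of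
`a`, which agrees with `φ` below `n`.
-/

/-- The sequence defined by `a 0 = 0`, `a 1 = 1`, and for `n ≥ 2`,
`a n = min { k < n : m * k + a k ≥ n }` (for `m = 1` this is the sequence `a` of the paper). -/
noncomputable def jseq (m : ℕ) (n : ℕ) : ℕ :=
  Nat.strongRecOn n (fun n ih =>
    if n = 0 then 0
    else if n = 1 then 1
    else sInf {k : ℕ | ∃ h : k < n, n ≤ m * k + ih k h})

section jseq

variable {m n k : ℕ}

theorem jseq_eq_ite (m n : ℕ) : jseq m n = if n = 0 then 0 else if n = 1 then 1
    else sInf {k : ℕ | k < n ∧ n ≤ m * k + jseq m k} := by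
  rw [jseq, Nat.strongRecOn_eq]
  simp only [exists_prop]
  rfl

@[simp] theorem jseq_zero : jseq m 0 = 0 := by simp [jseq_eq_ite]

@[simp] theorem jseq_one : jseq m 1 = 1 := by simp [jseq_eq_ite]

theorem jseq_of_two_le (hn : 2 ≤ n) :
    jseq m n = sInf {k : ℕ | k < n ∧ n ≤ m * k + jseq m k} := by
  rw [jseq_eq_ite, if_neg (by omega), if_neg (by omega)]

theorem jseq_le_of_le_mul_add (hn : 2 ≤ n) (hk : k < n) (h : n ≤ m * k + jseq m k) :
    jseq m n ≤ k := by
  rw [jseq_of_two_le hn]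
  exact Nat.sInf_le ⟨hk, h⟩

theorem jseq_lt_self_and_le_of_pos (hm : 1 ≤ m) (hn : 2 ≤ n) (hpred : 0 < jseq m (n - 1)) :
    jseq m n < n ∧ n ≤ m * jseq m n + jseq m (jseq m n) := by
  have : n - 1 ≤ m * (n - 1) := Nat.le_mul_of_pos_left (n - 1) hm
  show jseq m n ∈ {k : ℕ | k < n ∧ n ≤ m * k + jseq m k}
  rw [jseq_of_two_le hn]
  exact Nat.sInf_mem ⟨n - 1, by omega, by omega⟩

theorem jseq_pos (hm : 1 ≤ m) (hn : 0 < n) : 0 < jseq m n := by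
  induction n using Nat.strong_induction_on with
  | _ n ih =>
  obtain rfl | hn : n = 1 ∨ 2 ≤ n := by omega
  · simp
  have hle := (jseq_lt_self_and_le_of_pos hm hn (ih (n - 1) (by omega) (by omega))).2
  refine Nat.pos_of_ne_zero fun h => ?_
  rw [h, mul_zero, jseq_zero] at hle
  omega

theorem jseq_lt_self_and_le (hm : 1 ≤ m) (hn : 2 ≤ n) :
    jseq m n < n ∧ n ≤ m * jseq m n + jseq m (jseq m n) :=
  jseq_lt_self_and_le_of_pos hm hn (jseq_pos hm (by omega))

theorem jseq_monotone (hm : 1 ≤ m) : Monotone (jseq m) := by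
  refine monotone_nat_of_le_succ fun n => ?_
  rcases Nat.lt_or_ge n 2 with hn | hn
  · interval_cases n
    · simp
    · rw [jseq_one]
      exact jseq_pos hm (n := 2) (by omega)
  obtain ⟨hlt, hle⟩ := jseq_lt_self_and_le hm (n := n + 1) (by omega)
  rcases Nat.lt_or_ge (jseq m (n + 1)) n with h | h
  · exact jseq_le_of_le_mul_add hn h (by omega)
  · exact (jseq_lt_self_and_le hm hn).1.le.trans h

theorem jseq_eq_of_le_of_lt (hm : 1 ≤ m) (hn : 2 ≤ n) (hk : k < n)
    (hle : n ≤ m * k + jseq m k) (hlt : m * (k - 1) + jseq m (k - 1) < n) : jseq m n = k := by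
  refine le_antisymm (jseq_le_of_le_mul_add hn hk hle) (Nat.le_of_not_lt fun h => ?_)
  have hprev : jseq m n ≤ k - 1 := by omega
  have := (jseq_lt_self_and_le hm hn).2
  have := jseq_monotone hm hprev
  have := Nat.mul_le_mul_left m hprev
  omega

end jseq

namespace List

local instance : IsTrans ℕ fun a b => b + 2 ≤ a where
  trans _ _ _ h₁ h₂ := by omega

variable {l : List ℕ} {b : ℕ}

theorem isZeckendorfRep_iff :
    IsZeckendorfRep l ↔ l.IsChain (fun a b => b + 2 ≤ a) ∧ ∀ i ∈ l, 2 ≤ i := by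
  refine ⟨fun hl => ⟨hl.left_of_append, fun i hi => ?_⟩, fun ⟨hchain, hge⟩ => ?_⟩
  · exact (isChain_iff_pairwise.1 hl).rel_of_mem_append hi (mem_singleton_self 0)
  · refine hchain.append (isChain_singleton 0) fun x hx y hy => ?_
    obtain rfl : 0 = y := by simpa using hy
    exact hge x (mem_of_getLast? hx)

namespace IsZeckendorfRep

theorem two_le (hl : IsZeckendorfRep l) {i : ℕ} (hi : i ∈ l) : 2 ≤ i :=
  (isZeckendorfRep_iff.1 hl).2 i hi

theorem of_append_singleton (hl : IsZeckendorfRep (l ++ [b])) :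
    IsZeckendorfRep l ∧ ∀ i ∈ l, b + 2 ≤ i := by
  obtain ⟨hchain, hge⟩ := isZeckendorfRep_iff.1 hl
  refine ⟨isZeckendorfRep_iff.2 ⟨hchain.left_of_append, fun i hi => hge i (mem_append_left _ hi)⟩,
    fun i hi => (isChain_iff_pairwise.1 hchain).rel_of_mem_append hi (mem_singleton_self b)⟩

theorem map_pred (hl : IsZeckendorfRep l) (h3 : ∀ i ∈ l, 3 ≤ i) :
    IsZeckendorfRep (l.map (· - 1)) := by
  have hchain : (l ++ [1]).IsChain (fun a b => b + 2 ≤ a) := by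
    refine hl.left_of_append.append (isChain_singleton 1) fun x hx y hy => ?_
    obtain rfl : 1 = y := by simpa using hy
    exact h3 x (mem_of_getLast? hx)
  rw [IsZeckendorfRep, show [0] = [1].map (· - 1) from rfl, ← map_append, isChain_map]
  refine hchain.imp_of_mem_imp fun a b _ hb hab => ?_
  simp only [mem_append, mem_singleton] at hb
  obtain hb | rfl := hb
  · have := h3 b hb
    omega
  · omega

end IsZeckendorfRep

end List

namespace Nat

open List

def zeckendorfShift (n : ℕ) : ℕ := ((zeckendorf n).map fun i => fib (i - 1)).sum

theorem zeckendorfShift_sum_fib {l : List ℕ} (hl : IsZeckendorfRep l) :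
    zeckendorfShift (l.map fib).sum = (l.map fun i => fib (i - 1)).sum := by
  rw [zeckendorfShift, zeckendorf_sum_fib hl]

@[simp] theorem zeckendorfShift_zero : zeckendorfShift 0 = 0 := by simp [zeckendorfShift]

@[simp] theorem zeckendorfShift_one : zeckendorfShift 1 = 1 :=
  zeckendorfShift_sum_fib (l := [2]) (by simp [IsZeckendorfRep])

theorem zeckendorfShift_pos {n : ℕ} (hn : 0 < n) : 0 < zeckendorfShift n := by
  have hi : greatestFib n ∈ zeckendorf n := by
    rw [zeckendorf_of_pos hn]
    exact mem_cons_self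
  have := (isZeckendorfRep_zeckendorf n).two_le hi
  exact (fib_pos.2 (by omega)).trans_le (le_sum_of_mem (mem_map_of_mem hi))

theorem zeckendorfShift_add_zeckendorfShift_sum_fib {l : List ℕ} (hl : IsZeckendorfRep l)
    (h3 : ∀ i ∈ l, 3 ≤ i) :
    zeckendorfShift (l.map fib).sum + zeckendorfShift (zeckendorfShift (l.map fib).sum) =
      (l.map fib).sum := by
  have hshift : ((l.map (· - 1)).map fib).sum = (l.map fun i => fib (i - 1)).sum := by
    rw [map_map]
    rfl
  rw [zeckendorfShift_sum_fib hl, ← hshift, zeckendorfShift_sum_fib (hl.map_pred h3),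
    map_map, map_map, ← sum_map_add]
  refine congrArg sum (map_congr_left fun i hi => ?_)
  obtain ⟨j, rfl⟩ : ∃ j, i = j + 1 := ⟨i - 1, by have := hl.two_le hi; omega⟩
  simp only [Function.comp_apply, Nat.add_sub_cancel]
  rw [fib_add_one (by have := hl.two_le hi; omega), add_comm]

theorem zeckendorfShift_cases (n : ℕ) :
    zeckendorfShift n + zeckendorfShift (zeckendorfShift n) = n ∨
      ∃ m, n = m + 1 ∧ zeckendorfShift n = zeckendorfShift m + 1 ∧
        zeckendorfShift m + zeckendorfShift (zeckendorfShift m) = m := by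
  obtain ⟨l, hl, rfl⟩ : ∃ l, IsZeckendorfRep l ∧ (l.map fib).sum = n :=
    ⟨_, isZeckendorfRep_zeckendorf n, sum_zeckendorf_fib n⟩
  obtain rfl | ⟨L, b, rfl⟩ := l.eq_nil_or_concat'
  · simp
  obtain ⟨hL, hgap⟩ := hl.of_append_singleton
  obtain rfl | hb := (hl.two_le (mem_append_right L (mem_singleton_self b))).eq_or_lt
  · refine .inr ⟨(L.map fib).sum, by simp, ?_, zeckendorfShift_add_zeckendorfShift_sum_fib hL
      fun i hi => by have := hgap i hi; omega⟩
    rw [zeckendorfShift_sum_fib hl, zeckendorfShift_sum_fib hL]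
    simp
  · refine .inl (zeckendorfShift_add_zeckendorfShift_sum_fib hl fun i hi => ?_)
    rcases mem_append.1 hi with hi | hi
    · have := hgap i hi
      omega
    · rw [mem_singleton.1 hi]
      omega

end Nat

open Nat in
theorem jseq_one_eq_zeckendorfShift (n : ℕ) : jseq 1 n = zeckendorfShift n := by
  induction n using Nat.strong_induction_on with
  | _ n ih =>
  obtain rfl | rfl | hn : n = 0 ∨ n = 1 ∨ 2 ≤ n := by omega
  · simp
  · simp
  have hmono {j k : ℕ} (hjk : j ≤ k) (hk : k < n) : zeckendorfShift j ≤ zeckendorfShift k := by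
    rw [← ih j (by omega), ← ih k hk]
    exact jseq_monotone le_rfl hjk
  have hpos : 0 < zeckendorfShift n := zeckendorfShift_pos (by omega)
  rcases zeckendorfShift_cases n with hfix | ⟨m, rfl, hsucc, hfix⟩
  · have hlt : zeckendorfShift n < n := by
      have := zeckendorfShift_pos hpos
      omega
    refine jseq_eq_of_le_of_lt le_rfl hn hlt ?_ ?_
    · rw [ih _ hlt]
      omega
    · rw [ih _ (by omega)]
      have := hmono (Nat.sub_le (zeckendorfShift n) 1) hlt
      omega
  · have hlt : zeckendorfShift (m + 1) < m + 1 := by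
      have := zeckendorfShift_pos (zeckendorfShift_pos (n := m) (by omega))
      omega
    refine jseq_eq_of_le_of_lt le_rfl hn hlt ?_ ?_
    · rw [ih _ hlt]
      have := hmono (j := zeckendorfShift m) (by omega) hlt
      omega
    · rw [ih _ (by omega), hsucc, Nat.add_sub_cancel]
      omega

theorem bettina_general (n : ℕ) (l : List ℕ)
    (hchain : l.Chain' (fun x y => y + 2 ≤ x))
    (hge : ∀ i ∈ l, 2 ≤ i)
    (hsum : n = (l.map Nat.fib).sum) :
    jseq 1 n = (l.map (fun i => Nat.fib (i - 1))).sum := by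
  rw [hsum, jseq_one_eq_zeckendorfShift,
    Nat.zeckendorfShift_sum_fib (List.isZeckendorfRep_iff.2 ⟨hchain, hge⟩)]

/-- Bettina's theorem: if `n = f_{i_1} + ... + f_{i_r}` is the Zeckendorf representation
of `n ≥ 1` (indices strictly decreasing, no two consecutive, all `≥ 2`), then
`a n = f_{i_1 - 1} + ... + f_{i_r - 1}`. -/
theorem bettina (n : ℕ) (l : List ℕ) (hn : 1 ≤ n)
    (hchain : l.Chain' (fun x y => y + 2 ≤ x))
    (hge : ∀ i ∈ l, 2 ≤ i)
    (hsum : n = (l.map Nat.fib).sum) :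
    jseq 1 n = (l.map (fun i => Nat.fib (i - 1))).sum :=
  bettina_general n l hchain hge hsum
end

section
/- In the infinite Jaco graph J_∞(f) for f(x) = mx + c (m ≥ 1, c ≥ 0), the in-degrees satisfy d⁻(v_{n+1}) ∈ { d⁻(v_n), d⁻(v_n) + 1 } for all n ≥ 1. -/
/-- In-degree of vertex `j` in the infinite linear Jaco graph for `f x = m * x + c`:
`d⁻(v_j)` is the number of tails `1 ≤ i < j` with `f i + i - d⁻(v_i) ≥ j`
(stated subtraction-free as `j + d⁻(v_i) ≤ m * i + c + i`). -/
noncomputable def jacoIndeg (m c : ℕ) (j : ℕ) : ℕ :=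
  Nat.strongRecOn j (fun j ih =>
    ((Finset.Ico 1 j).attach.filter (fun i =>
      j + ih i.1 (Finset.mem_Ico.mp i.2).2 ≤ m * i.1 + c + i.1)).card)

/-- `(v_i, v_j)` is an arc of the infinite Jaco graph `J_∞(mx + c)` iff `1 ≤ i < j` and
`f(i) + i - d⁻(v_i) ≥ j`. -/
def JacoArc (m c i j : ℕ) : Prop :=
  1 ≤ i ∧ i < j ∧ j + jacoIndeg m c i ≤ m * i + c + i

noncomputable instance (m c i j : ℕ) : Decidable (JacoArc m c i j) := by
  unfold JacoArc; infer_instance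

/-- Out-degree of `v_i` in the infinite Jaco graph `J_∞(mx + c)`. -/
noncomputable def jacoOutdegInf (m c i : ℕ) : ℕ := {j | JacoArc m c i j}.ncard

/-- Out-degree of `v_i` in the finite Jaco graph `J_n(mx + c)`. -/
noncomputable def jacoOutdeg (m c n i : ℕ) : ℕ :=
  ((Finset.Icc 1 n).filter (fun j => JacoArc m c i j)).card

/-- Total degree of `v_i` in the underlying graph of `J_n(mx + c)`
(for `i ≤ n` the in-degree in `J_n` agrees with that in `J_∞`). -/
noncomputable def jacoDeg (m c n i : ℕ) : ℕ := jacoIndeg m c i + jacoOutdeg m c n i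

/-- Number of arcs of the finite Jaco graph `J_n(mx + c)`. -/
noncomputable def jacoArcs (m c n : ℕ) : ℕ :=
  (((Finset.Icc 1 n) ×ˢ (Finset.Icc 1 n)).filter (fun p => JacoArc m c p.1 p.2)).card

/-!
Write `r(i) = f(i) + i - d⁻(v_i)` for the reach of `v_i`, so that `(v_i, v_j)` is an arc iff
`i < j ≤ r(i)`. Then `v_{n+1}` receives an arc from `v_n` (since `d⁻(v_n) < n ≤ f(n)`) and
from every `i < n` with `r(i) ≥ n + 1`, while `v_n` receives one from every `i < n` with
`r(i) ≥ n`. The two counts differ by the number of `i < n` with `r(i) = n`, which is at most one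
because `r` is strictly increasing on `[1, n)`: by induction `d⁻` grows by at most one per step,
and `f` grows by `m ≥ 1`.
-/

open Finset

theorem Finset.card_filter_le_card_filter_add_one_le_add_one {α : Type*} [DecidableEq α]
    {s : Finset α} {g : α → ℕ} (hg : Set.InjOn g s) (n : ℕ) :
    #{i ∈ s | n ≤ g i} ≤ #{i ∈ s | n + 1 ≤ g i} + 1 := by
  have hsub : {i ∈ s | n ≤ g i} ⊆ {i ∈ s | n + 1 ≤ g i} ∪ {i ∈ s | g i = n} := by
    intro i hi
    obtain ⟨hs, hle⟩ := mem_filter.mp hi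
    rcases hle.eq_or_lt with heq | hlt
    · exact mem_union_right _ (mem_filter.mpr ⟨hs, heq.symm⟩)
    · exact mem_union_left _ (mem_filter.mpr ⟨hs, hlt⟩)
  have hfiber : #{i ∈ s | g i = n} ≤ 1 := by
    refine card_le_one.mpr fun a ha b hb => ?_
    rw [mem_filter] at ha hb
    exact hg ha.1 hb.1 (ha.2.trans hb.2.symm)
  calc #{i ∈ s | n ≤ g i} ≤ #({i ∈ s | n + 1 ≤ g i} ∪ {i ∈ s | g i = n}) := card_le_card hsub
    _ ≤ #{i ∈ s | n + 1 ≤ g i} + #{i ∈ s | g i = n} := card_union_le _ _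
    _ ≤ #{i ∈ s | n + 1 ≤ g i} + 1 := by omega

section JacoReach

variable {m c : ℕ}

theorem jacoIndeg_eq (m c j : ℕ) :
    jacoIndeg m c j = #{i ∈ Ico 1 j | j + jacoIndeg m c i ≤ m * i + c + i} := by
  rw [jacoIndeg, Nat.strongRecOn_eq]
  refine card_bij (fun a _ => a.1) (fun a ha => ?_) (fun a _ b _ h => Subtype.ext h) ?_
  · rw [mem_filter] at ha ⊢
    exact ⟨a.2, ha.2⟩
  · intro b hb
    rw [mem_filter] at hb
    exact ⟨⟨b, hb.1⟩, mem_filter.mpr ⟨mem_attach _ _, hb.2⟩, rfl⟩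

theorem jacoIndeg_le_sub_one (m c j : ℕ) : jacoIndeg m c j ≤ j - 1 := by
  rw [jacoIndeg_eq]
  exact (card_filter_le _ _).trans (Nat.card_Ico 1 j).le

/-- The reach `r(i) = f(i) + i - d⁻(v_i)`; by `jacoIndeg_le_sub_one` the subtraction never
truncates. -/
noncomputable def jacoReach (m c i : ℕ) : ℕ := m * i + c + i - jacoIndeg m c i

theorem add_jacoIndeg_le_iff_le_jacoReach (i j : ℕ) :
    j + jacoIndeg m c i ≤ m * i + c + i ↔ j ≤ jacoReach m c i := by
  have := jacoIndeg_le_sub_one m c i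
  unfold jacoReach
  omega

theorem jacoIndeg_eq_card_le_jacoReach (m c j : ℕ) :
    jacoIndeg m c j = #{i ∈ Ico 1 j | j ≤ jacoReach m c i} := by
  rw [jacoIndeg_eq m c j]
  simp only [add_jacoIndeg_le_iff_le_jacoReach]

theorem jacoIndeg_succ (hm : 1 ≤ m) {n : ℕ} (hn : 1 ≤ n) :
    jacoIndeg m c (n + 1) = #{i ∈ Ico 1 n | n + 1 ≤ jacoReach m c i} + 1 := by
  have hreach : n + 1 ≤ jacoReach m c n := by
    have := jacoIndeg_le_sub_one m c n
    have : n ≤ m * n := Nat.le_mul_of_pos_left n hm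
    unfold jacoReach
    omega
  rw [jacoIndeg_eq_card_le_jacoReach, Nat.Ico_succ_right_eq_insert_Ico hn, filter_insert,
    if_pos hreach, card_insert_of_notMem (fun h => by simp at h)]

theorem jacoReach_lt_jacoReach_succ (hm : 1 ≤ m) {k : ℕ}
    (hstep : jacoIndeg m c (k + 1) ≤ jacoIndeg m c k + 1) :
    jacoReach m c k < jacoReach m c (k + 1) := by
  have := jacoIndeg_le_sub_one m c k
  have := jacoIndeg_le_sub_one m c (k + 1)
  have : m * (k + 1) = m * k + m := Nat.mul_succ m k
  unfold jacoReach
  omega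

theorem jacoIndeg_succ_eq_or_of_injOn (hm : 1 ≤ m) {n : ℕ} (hn : 1 ≤ n)
    (hinj : Set.InjOn (jacoReach m c) (Ico 1 n)) :
    jacoIndeg m c (n + 1) = jacoIndeg m c n ∨ jacoIndeg m c (n + 1) = jacoIndeg m c n + 1 := by
  have hshrink : #{i ∈ Ico 1 n | n + 1 ≤ jacoReach m c i} ≤ #{i ∈ Ico 1 n | n ≤ jacoReach m c i} :=
    card_le_card (monotone_filter_right _ fun _ _ => Nat.le_of_succ_le)
  have hfiber := card_filter_le_card_filter_add_one_le_add_one hinj n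
  rw [jacoIndeg_succ hm hn, jacoIndeg_eq_card_le_jacoReach]
  omega

end JacoReach

/-- In `J_∞(mx + c)`, `d⁻(v_{n+1}) ∈ {d⁻(v_n), d⁻(v_n) + 1}` for all `n ≥ 1`. -/
theorem jaco_indeg_step (m c n : ℕ) (hm : 1 ≤ m) (hn : 1 ≤ n) :
    jacoIndeg m c (n + 1) = jacoIndeg m c n ∨
      jacoIndeg m c (n + 1) = jacoIndeg m c n + 1 := by
  induction n using Nat.strong_induction_on with
  | _ n ih =>
  have hmono : StrictMonoOn (jacoReach m c) (Set.Ico 1 n) :=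
    strictMonoOn_of_lt_add_one Set.ordConnected_Ico fun k _ hk _ => by
      apply jacoReach_lt_jacoReach_succ hm
      rcases ih k hk.2 hk.1 with h | h <;> omega
  exact jacoIndeg_succ_eq_or_of_injOn hm hn (by simpa using hmono.injOn)
end

section
/- For m = 0 and c = k > 0, the underlying graph of the linear Jaco graph J_n(k) (f(x) = k constant) is a disjoint union of ⌊n/(k+1)⌋ copies of the complete graph K_{k+1} together with one complete graph K_{n − (k+1)·⌊n/(k+1)⌋} on the remaining vertices. -/
theorem Nat.div_eq_div_iff_lt_mul_add {a b d : ℕ} (hd : 0 < d) (hab : a ≤ b) :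
    a / d = b / d ↔ b < d * (a / d) + d := by
  rw [← Nat.mul_succ, Nat.mul_comm, ← Nat.div_lt_iff_lt_mul hd, Nat.lt_succ_iff]
  exact ⟨ge_of_eq, (Nat.div_le_div_right hab).antisymm⟩

theorem Nat.div_eq_div_iff_mul_div_le {a b d : ℕ} (hd : 0 < d) (hab : a ≤ b) :
    a / d = b / d ↔ d * (b / d) ≤ a := by
  rw [Nat.mul_comm, ← Nat.le_div_iff_mul_le hd]
  exact ⟨ge_of_eq, (Nat.div_le_div_right hab).antisymm⟩

theorem jacoIndeg_eq_card_filter (m c j : ℕ) : jacoIndeg m c j =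
    ((Finset.Ico 1 j).filter (fun i => j + jacoIndeg m c i ≤ m * i + c + i)).card := by
  have hunfold : jacoIndeg m c j = ((Finset.Ico 1 j).attach.filter
      (fun i => j + jacoIndeg m c i.1 ≤ m * i.1 + c + i.1)).card := by
    rw [jacoIndeg, Nat.strongRecOn, WellFounded.fix_eq]
    rfl
  rw [hunfold, Finset.filter_attach (fun i => j + jacoIndeg m c i ≤ m * i + c + i),
    Finset.card_map, Finset.card_attach]

theorem sub_one_div_eq_iff_add_mod_le {i j k : ℕ} (hi : 1 ≤ i) (hij : i < j) :
    (i - 1) / (k + 1) = (j - 1) / (k + 1) ↔ j + (i - 1) % (k + 1) ≤ k + i := by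
  rw [Nat.div_eq_div_iff_lt_mul_add k.add_one_pos (by omega)]
  have := Nat.div_add_mod (i - 1) (k + 1)
  omega

theorem sub_one_div_eq_iff_sub_mod_le {i j k : ℕ} (hi : 1 ≤ i) (hij : i < j) :
    (i - 1) / (k + 1) = (j - 1) / (k + 1) ↔ j - (j - 1) % (k + 1) ≤ i := by
  rw [Nat.div_eq_div_iff_mul_div_le k.add_one_pos (by omega)]
  have := Nat.div_add_mod (j - 1) (k + 1)
  omega

theorem jacoIndeg_zero (k j : ℕ) : jacoIndeg 0 k j = (j - 1) % (k + 1) := by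
  induction j using Nat.strongRecOn with
  | _ j ih =>
  have hmod_le : (j - 1) % (k + 1) ≤ j - 1 := Nat.mod_le _ _
  have hblock : (Finset.Ico 1 j).filter (fun i => j + jacoIndeg 0 k i ≤ 0 * i + k + i)
      = Finset.Ico (j - (j - 1) % (k + 1)) j := by
    ext i
    simp only [Finset.mem_filter, Finset.mem_Ico, zero_mul, zero_add]
    by_cases hi : 1 ≤ i
    · by_cases hij : i < j
      · simp only [hi, hij, ih i hij, ← sub_one_div_eq_iff_add_mod_le hi hij,
          sub_one_div_eq_iff_sub_mod_le hi hij, and_self, true_and, and_true]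
      · simp only [hij, and_false, false_and]
    · omega
  rw [jacoIndeg_eq_card_filter, hblock, Nat.card_Ico]
  omega

theorem jaco_constant_blocks_general (k n : ℕ) :
    ∀ i j : ℕ, 1 ≤ i → i < j → j ≤ n →
      (JacoArc 0 k i j ↔ (i - 1) / (k + 1) = (j - 1) / (k + 1)) := by
  intro i j hi hij _
  rw [JacoArc, jacoIndeg_zero, zero_mul, zero_add, ← sub_one_div_eq_iff_add_mod_le hi hij]
  exact ⟨fun h => h.2.2, fun h => ⟨hi, hij, h⟩⟩

/-- For `m = 0` and `c = k > 0`, the underlying graph of `J_n(k)` is the disjoint union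
of `⌊n/(k+1)⌋` copies of `K_{k+1}` and one `K_{n - (k+1)⌊n/(k+1)⌋}`: vertices `i < j` are
adjacent iff they lie in the same block of `k + 1` consecutive vertices. -/
theorem jaco_constant_blocks (k n : ℕ) (hk : 1 ≤ k) :
    ∀ i j : ℕ, 1 ≤ i → i < j → j ≤ n →
      (JacoArc 0 k i j ↔ (i - 1) / (k + 1) = (j - 1) / (k + 1)) :=
  jaco_constant_blocks_general k n
end
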